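/- arXiv:1406.1914 — 2 statements merged into one kernel-verified Lean document; each statement's English description precedes it below -/
import Mathlib

section
/- Let Q be a simple (n+1)-polytope with pairwise disjoint facets Q₁, …, Q_k whose vertices exhaust all vertices of Q, and let λ be an isotropy function on the remaining facets F₁,…,F_m of Q. Extend λ to a function η on all facets of Q by η(F_i) = (λ(F_i), 0) ∈ ℤⁿ × {0} ⊆ ℤ^{n+1} and η(Q_j) = (0,…,0,1) ∈ ℤ^{n+1}. Then η is a di-characteristic function on Q. -/
/-!
Facets through a common point contain at most one of the pairwise disjoint `Qⱼ`. The vectors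
`η` assigns to them are therefore the `(λ(Fᵢ), 0)` for the facets `Fᵢ` through that point,
which are independent because `λ` is an isotropy function, together with possibly
`(0, …, 0, 1)`, which is independent of `ℤⁿ × {0}`.
-/

open Set

variable {V : Type*} [AddCommGroup V] [Module ℝ V]

/-- A (convex) polytope: the convex hull of a finite set of points. -/
def IsPolytope (P : Set V) : Prop := ∃ s : Finset V, P = convexHull ℝ (↑s : Set V)

/-- The dimension of a subset of a real vector space: the dimension of its
direction (the vector span of differences of its points). -/
noncomputable def pdim (S : Set V) : ℕ := Module.finrank ℝ (vectorSpan ℝ S)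

/-- `F` is a face of the polytope `P`: either `F = P` or `F` is the intersection of `P`
with a supporting hyperplane. -/
def IsFace (P F : Set V) : Prop :=
  F = P ∨ ∃ (f : V →ₗ[ℝ] ℝ) (c : ℝ), (∀ x ∈ P, f x ≤ c) ∧ F = {x ∈ P | f x = c}

/-- A facet is a nonempty face of codimension one. -/
def IsFacet (P F : Set V) : Prop := IsFace P F ∧ F.Nonempty ∧ pdim F + 1 = pdim P

/-- A vertex is a point whose singleton is a face. -/
def IsVertex (P : Set V) (v : V) : Prop := IsFace P {v}

/-- An edge is a nonempty one-dimensional face. -/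
def IsEdge (P e : Set V) : Prop := IsFace P e ∧ e.Nonempty ∧ pdim e = 1

/-- A polytope is simple if every vertex lies on exactly `dim P` facets. -/
def IsSimple (P : Set V) : Prop :=
  ∀ v, IsVertex P v → {F | IsFacet P F ∧ v ∈ F}.ncard = pdim P

/-- A di-characteristic function on a simple polytope `P`: it assigns to each facet a
vector in `ℤ^d`, such that the vectors assigned to any collection of facets with
nonempty common intersection are linearly independent over `ℤ`. -/
def IsDiChar {V : Type*} [AddCommGroup V] [Module ℝ V] {d : ℕ}
    (P : Set V) (ξ : Set V → (Fin d → ℤ)) : Prop :=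
  ∀ G : Set (Set V), (∀ A ∈ G, IsFacet P A) → (⋂₀ G).Nonempty →
    LinearIndependent ℤ (fun A : G => ξ (A : Set V))

theorem linearIndependent_sumElim_snoc_zero_single_last {R ι : Type*} [Ring R] {n : ℕ}
    {v : ι → Fin n → R} (hv : LinearIndependent R v) :
    LinearIndependent R (Sum.elim (fun i => (Fin.snoc (v i) 0 : Fin (n + 1) → R))
      (fun _ : Unit => Pi.single (Fin.last n) 1)) := by
  let initLast : (Fin (n + 1) → R) →ₗ[R] (Fin n → R) × R :=
    (LinearMap.funLeft R R Fin.castSucc).prod (LinearMap.proj (Fin.last n))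
  have hone : LinearIndependent R (fun _ : Unit => (1 : R)) :=
    Fintype.linearIndependent_iff.2 fun g hg () => by simpa using hg
  apply LinearIndependent.of_comp initLast
  convert linearIndependent_inl_union_inr' hv hone using 1
  ext (i | _) <;> simp [initLast, LinearMap.funLeft]

theorem subsingleton_inter_range_of_sInter_nonempty {α κ : Type*} {Qe : κ → Set α}
    (hdisj : ∀ j j', j ≠ j' → Qe j ∩ Qe j' = ∅) {G : Set (Set α)} (hG : (⋂₀ G).Nonempty) :
    (G ∩ range Qe).Subsingleton := by
  obtain ⟨x, hx⟩ := hG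
  rintro _ ⟨hA, j, rfl⟩ _ ⟨hB, j', rfl⟩
  by_contra hne
  have hjj' : j ≠ j' := fun h => hne (h ▸ rfl)
  exact (hdisj j j' hjj').subset ⟨hx _ hA, hx _ hB⟩

theorem linearIndependent_of_subset_range_union_range {R α M ι κ : Type*} [Ring R]
    [AddCommGroup M] [Module R M] {G : Set α} {F : ι → α} {Qe : κ → α}
    (hG : G ⊆ range Qe ∪ range F) (hGQe : (G ∩ range Qe).Subsingleton)
    {η : α → M} {u : ι → M} {e : M} (hηF : ∀ i, η (F i) = u i) (hηQe : ∀ j, η (Qe j) = e)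
    (hu : LinearIndependent R (Sum.elim (fun i : {i | F i ∈ G} => u i) (fun _ : Unit => e))) :
    LinearIndependent R (fun A : G => η A) := by
  classical
  let ψ : G → {i | F i ∈ G} ⊕ Unit := fun A =>
    if h : ∃ i, F i = A then .inl ⟨h.choose, by simp [h.choose_spec]⟩ else .inr ()
  have hψ_inl : ∀ A i, ψ A = .inl i → F i = A := by
    intro A i hA
    by_cases h : ∃ i, F i = A
    · simp only [ψ, dif_pos h, Sum.inl.injEq] at hA
      rw [← hA]
      exact h.choose_spec
    · simp [ψ, dif_neg h] at hA
  have hψ_inr : ∀ A, ψ A = .inr () → (A : α) ∈ range Qe := by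
    intro A hA
    by_cases h : ∃ i, F i = A
    · simp [ψ, dif_pos h] at hA
    · exact (hG A.2).resolve_right h
  have hψ : Function.Injective ψ := by
    intro A B hAB
    rcases hA : ψ A with i | ⟨⟩
    · exact Subtype.ext ((hψ_inl A i hA).symm.trans (hψ_inl B i (hAB ▸ hA)))
    · exact Subtype.ext (hGQe ⟨A.2, hψ_inr A hA⟩ ⟨B.2, hψ_inr B (hAB ▸ hA)⟩)
  convert hu.comp ψ hψ with A
  rcases hA : ψ A with i | ⟨⟩
  · simp [hA, ← hψ_inl A i hA, hηF]
  · obtain ⟨j, hj⟩ := hψ_inr A hA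
    simp [hA, ← hj, hηQe]

theorem extension_of_isotropy_is_diChar_general
    {n k m : ℕ} (Q : Set (Fin (n + 1) → ℝ))
    (Qe : Fin k → Set (Fin (n + 1) → ℝ)) (F : Fin m → Set (Fin (n + 1) → ℝ))
    (hdisj : ∀ j j', j ≠ j' → Qe j ∩ Qe j' = ∅)
    (hall : {G | IsFacet Q G} = Set.range Qe ∪ Set.range F)
    (lam : Fin m → (Fin n → ℤ))
    (hlam : ∀ I : Set (Fin m), (⋂ i ∈ I, F i).Nonempty →
      LinearIndependent ℤ (fun i : I => lam i))
    (η : Set (Fin (n + 1) → ℝ) → (Fin (n + 1) → ℤ))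
    (hη₁ : ∀ i, η (F i) = Fin.snoc (lam i) 0)
    (hη₂ : ∀ j, η (Qe j) = Pi.single (Fin.last n) 1) :
    IsDiChar Q η := by
  intro G hG hne
  have hGF : (⋂ i ∈ {i | F i ∈ G}, F i).Nonempty :=
    hne.mono fun x hx => mem_iInter₂.2 fun _ hi => mem_sInter.1 hx _ hi
  refine linearIndependent_of_subset_range_union_range (fun A hA => hall ▸ hG A hA)
    (subsingleton_inter_range_of_sInter_nonempty hdisj hne) hη₁ hη₂ ?_
  exact linearIndependent_sumElim_snoc_zero_single_last (hlam _ hGF)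

/-- Let `Q` be a simple `(n+1)`-polytope with pairwise disjoint facets `Q₁, …, Q_k`
whose vertices exhaust all vertices of `Q`, and let `λ` be an isotropy function on the
remaining facets `F₁, …, F_m` of `Q`.  Extend `λ` to a function `η` on all facets of
`Q` by `η(Fᵢ) = (λ(Fᵢ), 0)` and `η(Q_j) = (0, …, 0, 1)`.  Then `η` is a
di-characteristic function on `Q`. -/
theorem extension_of_isotropy_is_diChar
    {n k m : ℕ} (Q : Set (Fin (n + 1) → ℝ)) (hQ : IsPolytope Q)
    (hdim : pdim Q = n + 1) (hsimple : IsSimple Q)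
    (Qe : Fin k → Set (Fin (n + 1) → ℝ)) (F : Fin m → Set (Fin (n + 1) → ℝ))
    (hQe : ∀ j, IsFacet Q (Qe j)) (hF : ∀ i, IsFacet Q (F i))
    (hdisj : ∀ j j', j ≠ j' → Qe j ∩ Qe j' = ∅)
    (hvert : ∀ v, IsVertex Q v → ∃ j, v ∈ Qe j)
    (hall : {G | IsFacet Q G} = Set.range Qe ∪ Set.range F)
    (lam : Fin m → (Fin n → ℤ))
    (hlam : ∀ I : Set (Fin m), (⋂ i ∈ I, F i).Nonempty →
      LinearIndependent ℤ (fun i : I => lam i))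
    (η : Set (Fin (n + 1) → ℝ) → (Fin (n + 1) → ℤ))
    (hη₁ : ∀ i, η (F i) = Fin.snoc (lam i) 0)
    (hη₂ : ∀ j, η (Qe j) = Pi.single (Fin.last n) 1) :
    IsDiChar Q η :=
  extension_of_isotropy_is_diChar_general Q Qe F hdisj hall lam hlam η hη₁ hη₂
end

section
/- Let Q be a simple (n+1)-polytope whose exceptional facets Q₁, …, Q_k are pairwise disjoint and contain all vertices of Q, i.e., V(Q) = ⋃ V(Q_j). Then Q = ⋃_{j=1}^k U(Q_j), where U(Q_j) = Q \ C(Q_j) and C(Q_j) is the union of all faces of Q disjoint from Q_j. -/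
/-!
If a point `x` of `Q` lay in every `C(Q_j)`, pick for each `j` a face through `x` missing `Q_j`;
such a face is proper, hence exposed by a supporting functional. The sum of these functionals
exposes a face containing `x`, namely the intersection of the chosen faces. Being a nonempty
face of a polytope it contains a vertex `v`, and `v` lies on some `Q_j` — yet also on the face
chosen to miss `Q_j`.
-/

open Set

variable {V : Type*} [AddCommGroup V] [Module ℝ V]

open Filter Topology

theorem IsFace.subset {P F : Set V} (hF : IsFace P F) : F ⊆ P := by
  rcases hF with rfl | ⟨f, c, -, rfl⟩
  exacts [subset_rfl, sep_subset _ _]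

theorem IsFace.exists_supporting_of_inter_eq_empty {P F G : Set V} (hF : IsFace P F)
    (hGP : G ⊆ P) (hG : G.Nonempty) (hFG : F ∩ G = ∅) :
    ∃ (f : V →ₗ[ℝ] ℝ) (c : ℝ), (∀ x ∈ P, f x ≤ c) ∧ F = {x ∈ P | f x = c} := by
  refine hF.resolve_left ?_
  rintro rfl
  exact hG.ne_empty (by rwa [inter_eq_right.2 hGP] at hFG)

theorem exists_dual_injOn (s : Finset V) : ∃ g : Module.Dual ℝ V, InjOn g s := by
  -- The functionals identifying `p ≠ q` form the proper subspace `ker (ev (p - q))`, and finitely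
  -- many proper subspaces never cover a real vector space.
  by_contra! hnot
  obtain ⟨⟨⟨p, q⟩, hpq⟩, htop⟩ := Subspace.exists_eq_top_of_iUnion_eq_univ
    (p := fun pq : {pq : s × s // pq.1 ≠ pq.2} =>
      LinearMap.ker (LinearMap.applyₗ (pq.1.1 - pq.1.2 : V) : Module.Dual ℝ V →ₗ[ℝ] ℝ)) <| by
    refine eq_univ_of_forall fun g => ?_
    obtain ⟨p, hp, q, hq, hgpq, hne⟩ : ∃ p ∈ s, ∃ q ∈ s, g p = g q ∧ p ≠ q := by
      simpa [InjOn] using hnot g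
    exact mem_iUnion.2 ⟨⟨(⟨p, hp⟩, ⟨q, hq⟩), by simpa using hne⟩, by simp [hgpq]⟩
  obtain ⟨φ, hφ⟩ := Module.Projective.exists_dual_ne_zero ℝ
    (sub_ne_zero.2 (Subtype.coe_injective.ne hpq))
  exact hφ (htop ▸ Submodule.mem_top : φ ∈ LinearMap.ker (LinearMap.applyₗ ((p : V) - q)))

theorem sep_convexHull_eq_convexHull_filter {s : Finset V} {f : V →ₗ[ℝ] ℝ} {c : ℝ}
    (hs : ∀ p ∈ s, f p ≤ c) :
    {x ∈ convexHull ℝ (s : Set V) | f x = c} = convexHull ℝ ↑(s.filter (f · = c)) := by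
  refine Subset.antisymm ?_ fun x hx =>
    ⟨convexHull_mono (Finset.coe_subset.2 (Finset.filter_subset _ s)) hx,
      convexHull_min (fun p hp => (Finset.mem_filter.1 hp).2) (convex_hyperplane f.isLinear c) hx⟩
  rintro x ⟨hx, hfx⟩
  obtain ⟨w, hw0, hw1, rfl⟩ := Finset.mem_convexHull'.1 hx
  -- `∑ w p (c - f p) = 0` with nonnegative terms, so `w` vanishes off the hyperplane.
  have hslack : ∀ p ∈ s, w p * (c - f p) = 0 := by
    refine (Finset.sum_eq_zero_iff_of_nonneg fun p hp =>
      mul_nonneg (hw0 p hp) (sub_nonneg.2 (hs p hp))).1 ?_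
    simp only [mul_sub, Finset.sum_sub_distrib, ← Finset.sum_mul, hw1, one_mul]
    simp [← hfx, map_sum, smul_eq_mul]
  have hzero : ∀ p ∈ s, f p ≠ c → w p = 0 := fun p hp hne =>
    (mul_eq_zero.1 (hslack p hp)).resolve_right (sub_ne_zero.2 hne.symm)
  refine Finset.mem_convexHull'.2 ⟨w, fun p hp => hw0 p (Finset.mem_filter.1 hp).1, ?_, ?_⟩
  · rwa [Finset.sum_filter_of_ne fun p hp hw => not_not.1 fun hne => hw (hzero p hp hne)]
  · exact Finset.sum_filter_of_ne fun p hp hw =>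
      not_not.1 fun hne => hw (by rw [hzero p hp hne, zero_smul])

theorem exists_pos_forall_add_mul_lt {ι : Type*} (t : Finset ι) {a : ι → ℝ} (u : ι → ℝ)
    {b : ℝ} (h : ∀ i ∈ t, a i < b) : ∃ ε > 0, ∀ i ∈ t, a i + ε * u i < b := by
  have hnear : ∀ᶠ ε in 𝓝 (0 : ℝ), ∀ i ∈ t, a i + ε * u i < b :=
    (eventually_all_finset t).2 fun i hi =>
      (continuous_const.add (continuous_id.mul continuous_const)).continuousAt.eventually_lt
        continuousAt_const (by simpa using h i hi)
  obtain ⟨ε, hε, hpos⟩ := ((hnear.filter_mono nhdsWithin_le_nhds).and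
    (self_mem_nhdsWithin : ∀ᶠ ε in 𝓝[>] (0 : ℝ), 0 < ε)).exists
  exact ⟨ε, hpos, hε⟩

/-- Perturbing the supporting functional `f` by a small multiple of a functional injective on `s`
singles out one point of `s ∩ {f = c}`. -/
theorem exists_isVertex_of_supporting {s : Finset V} {f : V →ₗ[ℝ] ℝ} {c : ℝ}
    (hle : ∀ x ∈ convexHull ℝ (s : Set V), f x ≤ c)
    (hne : ∃ x ∈ convexHull ℝ (s : Set V), f x = c) :
    ∃ v ∈ convexHull ℝ (s : Set V), f v = c ∧ IsVertex (convexHull ℝ (s : Set V)) v := by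
  have hs : ∀ p ∈ s, f p ≤ c := fun p hp => hle p (subset_convexHull ℝ _ hp)
  have hfilter : (s.filter (f · = c)).Nonempty := by
    rw [← Finset.coe_nonempty, ← convexHull_nonempty_iff (𝕜 := ℝ),
      ← sep_convexHull_eq_convexHull_filter hs]
    exact hne
  obtain ⟨g, hg⟩ := exists_dual_injOn s
  obtain ⟨p₀, hp₀, hmax⟩ := (s.filter (f · = c)).exists_max_image g hfilter
  obtain ⟨hp₀s, hfp₀⟩ := Finset.mem_filter.1 hp₀
  obtain ⟨ε, hε, hbelow⟩ := exists_pos_forall_add_mul_lt (s.filter (f · < c))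
    (fun p => g p - g p₀) (fun p hp => (Finset.mem_filter.1 hp).2)
  set f' : V →ₗ[ℝ] ℝ := f + ε • g
  have hf' : ∀ p ∈ s, f' p ≤ c + ε * g p₀ ∧ (f' p = c + ε * g p₀ → p = p₀) := by
    intro p hp
    have hf'p : f' p = f p + ε * g p := rfl
    rcases (hs p hp).lt_or_eq with hlt | heq
    · have := hbelow p (Finset.mem_filter.2 ⟨hp, hlt⟩)
      exact ⟨by linarith, fun h' => by linarith⟩
    · have := hmax p (Finset.mem_filter.2 ⟨hp, heq⟩)
      refine ⟨by nlinarith, fun h' => hg hp hp₀s ?_⟩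
      exact mul_left_cancel₀ hε.ne' (by linarith)
  have hface : {x ∈ convexHull ℝ (s : Set V) | f' x = c + ε * g p₀} = {p₀} := by
    rw [sep_convexHull_eq_convexHull_filter fun p hp => (hf' p hp).1]
    convert convexHull_singleton p₀
    ext p
    simp only [Finset.coe_filter, mem_ofPred_eq, mem_singleton_iff]
    exact ⟨fun hp => (hf' p hp.1).2 hp.2, by rintro rfl; exact ⟨hp₀s, by simp [f', hfp₀]⟩⟩
  refine ⟨p₀, subset_convexHull ℝ _ hp₀s, hfp₀, Or.inr ⟨f', _, fun x hx => ?_, hface.symm⟩⟩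
  exact convexHull_min (fun p hp => (hf' p hp).1) (convex_halfSpace_le f'.isLinear _) hx

theorem exists_supporting_eq_sep_forall {P : Set V} {ι : Type*} [Fintype ι]
    (f : ι → V →ₗ[ℝ] ℝ) (c : ι → ℝ) (hle : ∀ i, ∀ x ∈ P, f i x ≤ c i) :
    ∃ (g : V →ₗ[ℝ] ℝ) (e : ℝ), (∀ x ∈ P, g x ≤ e) ∧
      {x ∈ P | g x = e} = {x ∈ P | ∀ i, f i x = c i} := by
  refine ⟨∑ i, f i, ∑ i, c i, fun x hx => ?_, ?_⟩
  · simpa only [LinearMap.sum_apply] using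
      Finset.sum_le_sum fun i _ => hle i x hx
  · ext x
    simp only [mem_ofPred_eq, LinearMap.sum_apply, and_congr_right_iff]
    intro hx
    simpa using Finset.sum_eq_sum_iff_of_le (s := Finset.univ) fun i _ => hle i x hx

theorem cover_by_facet_neighborhoods_general
    {n k : ℕ} (Q : Set (Fin (n + 1) → ℝ)) (hQ : IsPolytope Q)
    (Qe : Fin k → Set (Fin (n + 1) → ℝ)) (hQe : ∀ j, IsFacet Q (Qe j))
    (hvert : ∀ v, IsVertex Q v → ∃ j, v ∈ Qe j) :
    Q = ⋃ j, (Q \ ⋃₀ {F | IsFace Q F ∧ F ∩ Qe j = ∅}) := by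
  obtain ⟨s, rfl⟩ := hQ
  refine Subset.antisymm (fun x hx => ?_) (iUnion_subset fun _ => sdiff_subset)
  by_contra hcover
  replace hcover : ∀ j, ∃ F, IsFace (convexHull ℝ (s : Set _)) F ∧ F ∩ Qe j = ∅ ∧ x ∈ F := by
    simpa [hx] using hcover
  have hexposed : ∀ j, ∃ fc : ((Fin (n + 1) → ℝ) →ₗ[ℝ] ℝ) × ℝ,
      (∀ y ∈ convexHull ℝ (s : Set _), fc.1 y ≤ fc.2) ∧ fc.1 x = fc.2 ∧
        {y ∈ convexHull ℝ (s : Set _) | fc.1 y = fc.2} ∩ Qe j = ∅ := fun j => by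
    obtain ⟨F, hF, hFj, hxF⟩ := hcover j
    obtain ⟨f, c, hfc, rfl⟩ :=
      hF.exists_supporting_of_inter_eq_empty (hQe j).1.subset (hQe j).2.1 hFj
    exact ⟨(f, c), hfc, hxF.2, hFj⟩
  choose fc hle hxfc hdisj using hexposed
  obtain ⟨g, e, hge, hface⟩ :=
    exists_supporting_eq_sep_forall (fun j => (fc j).1) (fun j => (fc j).2) hle
  obtain ⟨v, hvQ, hgv, hv⟩ := exists_isVertex_of_supporting hge
    ⟨x, hx, (hface.symm.subset ⟨hx, hxfc⟩).2⟩
  obtain ⟨j, hvj⟩ := hvert v hv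
  exact (hdisj j).subset ⟨⟨hvQ, (hface.subset ⟨hvQ, hgv⟩).2 j⟩, hvj⟩

/-- Let `Q` be a simple `(n+1)`-polytope whose exceptional facets `Q₁, …, Q_k` are
pairwise disjoint and contain all vertices of `Q`.  Then `Q = ⋃ⱼ U(Q_j)`, where
`U(Q_j) = Q \ C(Q_j)` and `C(Q_j)` is the union of all faces of `Q` disjoint from
`Q_j`. -/
theorem cover_by_facet_neighborhoods
    {n k : ℕ} (Q : Set (Fin (n + 1) → ℝ)) (hQ : IsPolytope Q)
    (hdim : pdim Q = n + 1) (hsimple : IsSimple Q)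
    (Qe : Fin k → Set (Fin (n + 1) → ℝ)) (hQe : ∀ j, IsFacet Q (Qe j))
    (hdisj : ∀ j j', j ≠ j' → Qe j ∩ Qe j' = ∅)
    (hvert : ∀ v, IsVertex Q v → ∃ j, v ∈ Qe j) :
    Q = ⋃ j, (Q \ ⋃₀ {F | IsFace Q F ∧ F ∩ Qe j = ∅}) :=
  cover_by_facet_neighborhoods_general Q hQ Qe hQe hvert
end
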